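/- arXiv:1711.03549 — 2 statements merged into one kernel-verified Lean document; each statement's English description precedes it below -/
import Mathlib

section
/- For the odd cycle C_n with n ≥ 7, there exists a proper 3-colouring of C_n and a set of n−5 vertices whose colours may fade (be removed) such that every vertex that yields a rainbow neighbourhood still yields one; i.e., f^-(C_n) ≥ n − 5. -/
/-- The closed neighbourhood of `u` as a finset. -/
def closedNbr {V : Type*} [Fintype V] [DecidableEq V] (G : SimpleGraph V)
    [DecidableRel G.Adj] (u : V) : Finset V :=
  insert u (G.neighborFinset u)

/-- `u` yields a rainbow neighbourhood: `N[u]` meets every colour class. -/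
def YieldsRainbow {V : Type*} [Fintype V] [DecidableEq V] (G : SimpleGraph V)
    [DecidableRel G.Adj] {k : ℕ} (c : V → Fin k) (u : V) : Prop :=
  ∀ i : Fin k, ∃ v ∈ closedNbr G u, c v = i

/-- `F` is a fade set: every rainbow-yielding vertex still sees every colour
on vertices outside `F`. -/
def IsFadeSet {V : Type*} [Fintype V] [DecidableEq V] (G : SimpleGraph V)
    [DecidableRel G.Adj] {k : ℕ} (c : V → Fin k) (F : Finset V) : Prop :=
  ∀ u : V, YieldsRainbow G c u →
    ∀ i : Fin k, ∃ v ∈ closedNbr G u, c v = i ∧ v ∉ F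

/-- The fading number: the maximum cardinality of a fade set. -/
noncomputable def fadingNumber {V : Type*} [Fintype V] [DecidableEq V]
    (G : SimpleGraph V) [DecidableRel G.Adj] {k : ℕ} (c : V → Fin k) : ℕ :=
  sSup {m | ∃ F : Finset V, IsFadeSet G c F ∧ F.card = m}

lemma mem_closedNbr {V : Type*} [Fintype V] [DecidableEq V] (G : SimpleGraph V)
    [DecidableRel G.Adj] (u v : V) : v ∈ closedNbr G u ↔ v = u ∨ G.Adj u v := by
  simp [closedNbr]

lemma cyc_adj_iff {n : ℕ} (hn : 7 ≤ n) (u v : Fin n) :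
    (SimpleGraph.cycleGraph n).Adj u v ↔
      (v.val = u.val + 1 ∨ u.val = v.val + 1 ∨
       (u.val = n - 1 ∧ v.val = 0) ∨ (v.val = n - 1 ∧ u.val = 0)) := by
  have hu := u.isLt
  have hv := v.isLt
  have key : ∀ a b : Fin n, (a - b).val = 1 ↔
      (a.val = b.val + 1 ∨ (b.val = n - 1 ∧ a.val = 0)) := by
    intro a b
    rw [Fin.sub_def]
    simp only []
    have ha := a.isLt
    have hb := b.isLt
    constructor
    · intro h
      rcases Nat.lt_or_ge (n - b.val + a.val) n with h2 | h2
      · rw [Nat.mod_eq_of_lt h2] at h; omega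
      · rw [Nat.mod_eq_sub_mod h2, Nat.mod_eq_of_lt (by omega)] at h; omega
    · rintro (h | ⟨h1, h2⟩)
      · rw [Nat.mod_eq_sub_mod (by omega), Nat.mod_eq_of_lt (by omega)]; omega
      · rw [Nat.mod_eq_of_lt (by omega)]; omega
  rw [SimpleGraph.cycleGraph_adj', key, key]
  tauto

theorem stmt_7 (n : ℕ) (hn : 7 ≤ n) (hodd : Odd n) :
    ∃ (c : Fin n → Fin 3) (F : Finset (Fin n)),
      (∀ u v : Fin n, (SimpleGraph.cycleGraph n).Adj u v → c u ≠ c v) ∧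
      F.card = n - 5 ∧ IsFadeSet (SimpleGraph.cycleGraph n) c F := by
  have hn0 : 0 < n := by omega
  -- the colouring
  set c : Fin n → Fin 3 := fun i =>
    if i.val = n - 1 then 2 else if i.val % 2 = 0 then 0 else 1 with hc
  -- key vertices
  let a0 : Fin n := ⟨0, by omega⟩
  let a1 : Fin n := ⟨1, by omega⟩
  let b3 : Fin n := ⟨n - 3, by omega⟩
  let b2 : Fin n := ⟨n - 2, by omega⟩
  let b1 : Fin n := ⟨n - 1, by omega⟩
  let S : Finset (Fin n) := {a0, a1, b3, b2, b1}
  refine ⟨c, Sᶜ, ?_, ?_, ?_⟩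
  · -- proper colouring
    intro u v hadj
    rw [cyc_adj_iff hn] at hadj
    obtain ⟨k, hk⟩ := hodd
    have hu := u.isLt
    have hv := v.isLt
    simp only [hc]
    rcases hadj with h | h | ⟨h1, h2⟩ | ⟨h1, h2⟩ <;>
      · split_ifs <;> simp_all (config := { decide := true }) <;> omega
  · -- cardinality
    have hScard : S.card = 5 := by
      rw [show S = {a0, a1, b3, b2, b1} from rfl,
        Finset.card_insert_of_notMem, Finset.card_insert_of_notMem,
        Finset.card_insert_of_notMem, Finset.card_insert_of_notMem,
        Finset.card_singleton] <;>
      · simp only [Finset.mem_insert, Finset.mem_singleton, Fin.ext_iff,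
          a0, a1, b3, b2, b1]
        omega
    rw [Finset.card_compl, hScard, Fintype.card_fin]
  · -- fade set
    intro u hu i
    -- u sees colour 2, so b1 ∈ N[u], so u ∈ {b1, a0, b2}
    obtain ⟨v, hvmem, hv2⟩ := hu 2
    have hvval : v.val = n - 1 := by
      by_contra h
      simp only [hc, if_neg h] at hv2
      split_ifs at hv2 <;> exact absurd hv2 (by decide)
    have hveq : v = b1 := by simp [Fin.ext_iff, b1, hvval]
    subst hveq
    rw [mem_closedNbr, cyc_adj_iff hn] at hvmem
    have huval : u.val = n - 1 ∨ u.val = 0 ∨ u.val = n - 2 := by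
      have := u.isLt
      rcases hvmem with h | h | h | h
      · left; exact congrArg Fin.val h.symm ▸ rfl
      · simp only [b1] at h; omega
      · simp only [b1] at h; omega
      · simp only [b1] at h; omega
    -- colour facts
    have hc0 : c a0 = 0 := by simp [hc, a0]; omega
    have hc1 : c a1 = 1 := by simp [hc, a1]; omega
    have hc3 : c b3 = 0 := by
      obtain ⟨k, hk⟩ := hodd
      simp only [hc, b3]
      rw [if_neg (by omega), if_pos (by omega)]
    have hc2 : c b2 = 1 := by
      obtain ⟨k, hk⟩ := hodd
      simp only [hc, b2]
      rw [if_neg (by omega), if_neg (by omega)]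
    have hcb1 : c b1 = 2 := by simp [hc, b1]
    -- membership facts
    have adj : ∀ x y : Fin n, (y.val = x.val + 1 ∨ x.val = y.val + 1 ∨
        (x.val = n - 1 ∧ y.val = 0) ∨ (y.val = n - 1 ∧ x.val = 0)) →
        y ∈ closedNbr (SimpleGraph.cycleGraph n) x := by
      intro x y h
      rw [mem_closedNbr, cyc_adj_iff hn]
      exact Or.inr h
    have self : ∀ x : Fin n, x ∈ closedNbr (SimpleGraph.cycleGraph n) x := by
      intro x; rw [mem_closedNbr]; left; rfl
    have hueq : u = b1 ∨ u = a0 ∨ u = b2 := by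
      rcases huval with h | h | h
      · left; exact Fin.ext h
      · right; left; exact Fin.ext h
      · right; right; exact Fin.ext h
    have hmemS : ∀ x ∈ S, x ∉ (Sᶜ : Finset (Fin n)) := by
      intro x hx; simp [hx]
    have ha0S : a0 ∈ S := by simp [S]
    have ha1S : a1 ∈ S := by simp [S]
    have hb3S : b3 ∈ S := by simp [S]
    have hb2S : b2 ∈ S := by simp [S]
    have hb1S : b1 ∈ S := by simp [S]
    rcases hueq with h | h | h <;> subst h <;> fin_cases i
    · exact ⟨a0, adj b1 a0 (by simp [b1, a0]), hc0, hmemS _ ha0S⟩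
    · exact ⟨b2, adj b1 b2 (by simp [b1, b2]; omega), hc2, hmemS _ hb2S⟩
    · exact ⟨b1, self b1, hcb1, hmemS _ hb1S⟩
    · exact ⟨a0, self a0, hc0, hmemS _ ha0S⟩
    · exact ⟨a1, adj a0 a1 (by simp [a0, a1]), hc1, hmemS _ ha1S⟩
    · exact ⟨b1, adj a0 b1 (by simp [a0, b1]), hcb1, hmemS _ hb1S⟩
    · exact ⟨b3, adj b2 b3 (by simp [b2, b3]; omega), hc3, hmemS _ hb3S⟩
    · exact ⟨b2, self b2, hc2, hmemS _ hb2S⟩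
    · exact ⟨b1, adj b2 b1 (by simp [b2, b1]; omega), hcb1, hmemS _ hb1S⟩
end

section
/- Consider the thorn cycle C*_3 obtained from the triangle v_1 v_2 v_3 by attaching t_i ≥ 1 pendant vertices to v_i for each i. Then χ(C*_3) = 3, exactly the three vertices v_1, v_2, v_3 yield rainbow neighbourhoods under the colouring where v_i gets colour c_i and each pendant vertex gets a colour different from its support vertex, and the set of all t_1 + t_2 + t_3 pendant vertices is a fade set; hence the fading number of C*_3 with respect to this colouring is at least t_1 + t_2 + t_3. -/
/-- The thorn cycle `C*₃`: a triangle on `Fin 3` with `t i` pendant vertices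
attached to the `i`-th triangle vertex. -/
def thornC3 (t : Fin 3 → ℕ) : SimpleGraph (Fin 3 ⊕ Σ i : Fin 3, Fin (t i)) where
  Adj u v :=
    match u, v with
    | .inl a, .inl b => a ≠ b
    | .inl a, .inr p => a = p.1
    | .inr p, .inl a => a = p.1
    | .inr _, .inr _ => False
  symm := by
    constructor
    intro u v h
    match u, v with
    | .inl a, .inl b => exact fun he => h he.symm
    | .inl a, .inr p => exact h
    | .inr p, .inl a => exact h
    | .inr _, .inr _ => exact h.elim
  loopless := by
    constructor
    intro u h
    match u with
    | .inl a => exact h rfl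
    | .inr p => exact h

instance thornC3.decAdj (t : Fin 3 → ℕ) : DecidableRel (thornC3 t).Adj
  | .inl a, .inl b => inferInstanceAs (Decidable (a ≠ b))
  | .inl a, .inr p => inferInstanceAs (Decidable (a = p.1))
  | .inr p, .inl a => inferInstanceAs (Decidable (a = p.1))
  | .inr _, .inr _ => inferInstanceAs (Decidable False)

/-! The triangle needs three colours and the given colouring is proper. A pendant vertex has a
closed neighbourhood of only two vertices, so it cannot see three colours; each triangle vertex
already sees all three colours on the triangle, so every pendant vertex can fade. -/

section Rainbow

variable {V : Type*} [Fintype V] [DecidableEq V] {G : SimpleGraph V} [DecidableRel G.Adj]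
  {k : ℕ} {c : V → Fin k}

theorem YieldsRainbow.le_card_closedNbr {u : V} (h : YieldsRainbow G c u) :
    k ≤ (closedNbr G u).card := by
  have hsurj : (Finset.univ : Finset (Fin k)) ⊆ (closedNbr G u).image c := fun i _ => by
    obtain ⟨v, hv, rfl⟩ := h i
    exact Finset.mem_image_of_mem c hv
  simpa using (Finset.card_le_card hsurj).trans Finset.card_image_le

theorem IsFadeSet.card_le_fadingNumber {F : Finset V} (h : IsFadeSet G c F) :
    F.card ≤ fadingNumber G c :=
  le_csSup ⟨Fintype.card V, by rintro m ⟨F', -, rfl⟩; exact F'.card_le_univ⟩ ⟨F, h, rfl⟩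

end Rainbow

namespace thornC3

variable {t : Fin 3 → ℕ}

def colour (p : ∀ i : Fin 3, Fin (t i) → Fin 3) : Fin 3 ⊕ (Σ i : Fin 3, Fin (t i)) → Fin 3 :=
  Sum.elim id fun s => p s.1 s.2

def pendants (t : Fin 3 → ℕ) : Finset (Fin 3 ⊕ Σ i : Fin 3, Fin (t i)) :=
  Finset.univ.map ⟨Sum.inr, Sum.inr_injective⟩

theorem card_pendants : (pendants t).card = ∑ i : Fin 3, t i := by
  simp [pendants]

theorem inl_mem_closedNbr_inl (a i : Fin 3) :
    (Sum.inl i : Fin 3 ⊕ Σ i : Fin 3, Fin (t i)) ∈ closedNbr (thornC3 t) (Sum.inl a) := by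
  rw [closedNbr, Finset.mem_insert, SimpleGraph.mem_neighborFinset]
  by_cases h : i = a
  · exact Or.inl (congrArg Sum.inl h)
  · exact Or.inr fun he => h he.symm

theorem closedNbr_inr (s : Σ i : Fin 3, Fin (t i)) :
    closedNbr (thornC3 t) (Sum.inr s) = {Sum.inr s, Sum.inl s.1} := by
  ext (a | q) <;> simp only [closedNbr, Finset.mem_insert, Finset.mem_singleton,
    SimpleGraph.mem_neighborFinset, Sum.inl.injEq, Sum.inr.injEq, reduceCtorEq] <;> rfl

def triangle (t : Fin 3 → ℕ) : (⊤ : SimpleGraph (Fin 3)) →g thornC3 t :=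
  ⟨Sum.inl, fun h => h⟩

def coloring {p : ∀ i : Fin 3, Fin (t i) → Fin 3} (hp : ∀ i j, p i j ≠ i) :
    (thornC3 t).Coloring (Fin 3) :=
  SimpleGraph.Coloring.mk (colour p) <| by
    rintro (a | s) (b | s') hadj
    · exact hadj
    · exact fun h => hp s'.1 s'.2 (h.symm.trans hadj.symm)
    · exact fun h => hp s.1 s.2 (h.trans hadj.symm)
    · exact hadj.elim

theorem chromaticNumber_eq_three {p : ∀ i : Fin 3, Fin (t i) → Fin 3} (hp : ∀ i j, p i j ≠ i) :
    (thornC3 t).chromaticNumber = 3 :=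
  le_antisymm (by simpa using (coloring hp).colorable.chromaticNumber_le)
    (by simpa using SimpleGraph.chromaticNumber_mono_of_hom (triangle t))

theorem yieldsRainbow_inl (p : ∀ i : Fin 3, Fin (t i) → Fin 3) (a : Fin 3) :
    YieldsRainbow (thornC3 t) (colour p) (Sum.inl a) :=
  fun i => ⟨Sum.inl i, inl_mem_closedNbr_inl a i, rfl⟩

theorem not_yieldsRainbow_inr (p : ∀ i : Fin 3, Fin (t i) → Fin 3) (s : Σ i : Fin 3, Fin (t i)) :
    ¬ YieldsRainbow (thornC3 t) (colour p) (Sum.inr s) := fun h => by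
  have := h.le_card_closedNbr
  rw [closedNbr_inr] at this
  exact Nat.not_succ_le_self 2 (this.trans Finset.card_le_two)

theorem yieldsRainbow_iff (p : ∀ i : Fin 3, Fin (t i) → Fin 3) (u : Fin 3 ⊕ Σ i : Fin 3, Fin (t i)) :
    YieldsRainbow (thornC3 t) (colour p) u ↔ ∃ i : Fin 3, u = Sum.inl i := by
  rcases u with a | s
  · simpa using yieldsRainbow_inl p a
  · simpa using not_yieldsRainbow_inr p s

theorem isFadeSet_pendants (p : ∀ i : Fin 3, Fin (t i) → Fin 3) :
    IsFadeSet (thornC3 t) (colour p) (pendants t) := by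
  intro u hu i
  obtain ⟨a, rfl⟩ := (yieldsRainbow_iff p u).mp hu
  exact ⟨Sum.inl i, inl_mem_closedNbr_inl a i, rfl, by simp [pendants]⟩

end thornC3

theorem stmt_16_general (t : Fin 3 → ℕ)
    (p : ∀ i : Fin 3, Fin (t i) → Fin 3) (hp : ∀ i j, p i j ≠ i) :
    (thornC3 t).chromaticNumber = 3 ∧
    (∀ u : Fin 3 ⊕ Σ i : Fin 3, Fin (t i),
      YieldsRainbow (thornC3 t) (Sum.elim id (fun s => p s.1 s.2)) u ↔
        ∃ i : Fin 3, u = Sum.inl i) ∧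
    IsFadeSet (thornC3 t) (Sum.elim id (fun s => p s.1 s.2))
      ((Finset.univ : Finset (Σ i : Fin 3, Fin (t i))).map
        ⟨Sum.inr, Sum.inr_injective⟩) ∧
    (∑ i : Fin 3, t i) ≤
      fadingNumber (thornC3 t) (Sum.elim id (fun s => p s.1 s.2)) :=
  ⟨thornC3.chromaticNumber_eq_three hp, thornC3.yieldsRainbow_iff p,
    thornC3.isFadeSet_pendants p,
    thornC3.card_pendants.symm.le.trans (thornC3.isFadeSet_pendants p).card_le_fadingNumber⟩

theorem stmt_16 (t : Fin 3 → ℕ) (ht : ∀ i, 1 ≤ t i)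
    (p : ∀ i : Fin 3, Fin (t i) → Fin 3) (hp : ∀ i j, p i j ≠ i) :
    (thornC3 t).chromaticNumber = 3 ∧
    (∀ u : Fin 3 ⊕ Σ i : Fin 3, Fin (t i),
      YieldsRainbow (thornC3 t) (Sum.elim id (fun s => p s.1 s.2)) u ↔
        ∃ i : Fin 3, u = Sum.inl i) ∧
    IsFadeSet (thornC3 t) (Sum.elim id (fun s => p s.1 s.2))
      ((Finset.univ : Finset (Σ i : Fin 3, Fin (t i))).map
        ⟨Sum.inr, Sum.inr_injective⟩) ∧
    (∑ i : Fin 3, t i) ≤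
      fadingNumber (thornC3 t) (Sum.elim id (fun s => p s.1 s.2)) :=
  stmt_16_general t p hp
end
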